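/- Let ω : ℕ → ℕ → ℂ be the weighted adjacency matrix of an infinite weighted digraph and suppose that Σ_{i=1}^∞ |ω_{ik}|² < ∞ for every k ∈ ℕ. Then the operator Γ is densely defined, the adjoint of Γ₀ equals Ω (in particular Γ* ⊆ Γ₀* = Ω), and Ω is a closed operator. -/

import Mathlib

noncomputable section

open Complex

/-- The Hilbert space `ℓ²(ℕ, ℂ)`. -/
abbrev L2 : Type := lp (fun _ : ℕ => ℂ) 2

/-- The (everywhere-given, possibly junk-valued) formula for the weighted adjacency
operator: `(Ω v) k = ∑' i, v i * ω i k`. -/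
def OmF (ω : ℕ → ℕ → ℂ) (v : ℕ → ℂ) : ℕ → ℂ := fun k => ∑' i, v i * ω i k

/-- The domain of the weighted adjacency operator. -/
def OmDom (ω : ℕ → ℕ → ℂ) : Submodule ℂ L2 where
  carrier := {v : L2 | (∀ k, Summable fun i => (v : ℕ → ℂ) i * ω i k) ∧ Memℓp (OmF ω (v : ℕ → ℂ)) 2}
  zero_mem' := by
    constructor
    · intro k
      simp only [lp.coeFn_zero, Pi.zero_apply, zero_mul]
      exact summable_zero
    · have : OmF ω ((0 : L2) : ℕ → ℂ) = 0 := by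
        funext k
        simp [OmF, lp.coeFn_zero]
      rw [this]
      exact zero_memℓp
  add_mem' := by
    rintro a b ⟨ha1, ha2⟩ ⟨hb1, hb2⟩
    constructor
    · intro k
      have : (fun i => ((a + b : L2) : ℕ → ℂ) i * ω i k)
          = fun i => (a : ℕ → ℂ) i * ω i k + (b : ℕ → ℂ) i * ω i k := by
        funext i
        simp [lp.coeFn_add, add_mul]
      rw [this]
      exact (ha1 k).add (hb1 k)
    · have : OmF ω ((a + b : L2) : ℕ → ℂ) = OmF ω (a : ℕ → ℂ) + OmF ω (b : ℕ → ℂ) := by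
        funext k
        simp only [OmF, Pi.add_apply]
        rw [← Summable.tsum_add (ha1 k) (hb1 k)]
        congr 1
        funext i
        simp [lp.coeFn_add, add_mul]
      rw [this]
      exact ha2.add hb2
  smul_mem' := by
    rintro c a ⟨ha1, ha2⟩
    constructor
    · intro k
      have : (fun i => ((c • a : L2) : ℕ → ℂ) i * ω i k)
          = fun i => c * ((a : ℕ → ℂ) i * ω i k) := by
        funext i
        simp [lp.coeFn_smul, mul_assoc]
      rw [this]
      exact (ha1 k).mul_left c
    · have : OmF ω ((c • a : L2) : ℕ → ℂ) = c • OmF ω (a : ℕ → ℂ) := by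
        funext k
        simp only [OmF, Pi.smul_apply, smul_eq_mul]
        rw [← tsum_mul_left]
        congr 1
        funext i
        simp [lp.coeFn_smul, mul_assoc]
      rw [this]
      exact ha2.const_smul c

theorem mem_OmDom {ω : ℕ → ℕ → ℂ} {v : L2} :
    v ∈ OmDom ω ↔ (∀ k, Summable fun i => (v : ℕ → ℂ) i * ω i k) ∧
      Memℓp (OmF ω (v : ℕ → ℂ)) 2 := Iff.rfl

/-- The underlying linear map of the weighted adjacency operator. -/
def OmLM (ω : ℕ → ℕ → ℂ) : OmDom ω →ₗ[ℂ] L2 where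
  toFun v := ⟨OmF ω ((v : L2) : ℕ → ℂ), (mem_OmDom.mp v.2).2⟩
  map_add' a b := by
    apply Subtype.ext
    funext k
    simp only [lp.coeFn_add, Pi.add_apply]
    show OmF ω (((a : L2) + (b : L2) : L2) : ℕ → ℂ) k = _
    simp only [OmF]
    rw [← Summable.tsum_add ((mem_OmDom.mp a.2).1 k) ((mem_OmDom.mp b.2).1 k)]
    congr 1
    funext i
    simp [lp.coeFn_add, add_mul]
  map_smul' c a := by
    apply Subtype.ext
    funext k
    simp only [lp.coeFn_smul, Pi.smul_apply, RingHom.id_apply, smul_eq_mul]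
    show OmF ω ((c • (a : L2) : L2) : ℕ → ℂ) k = _
    simp only [OmF]
    rw [← tsum_mul_left]
    congr 1
    funext i
    simp [lp.coeFn_smul, mul_assoc]

/-- The weighted adjacency operator `Ω` as an unbounded operator on `ℓ²(ℕ,ℂ)`. -/
def OmegaOp (ω : ℕ → ℕ → ℂ) : L2 →ₗ.[ℂ] L2 := ⟨OmDom ω, OmLM ω⟩

/-- The subspace `D₀` of finitely supported sequences: the span of the standard basis. -/
def finSupp : Submodule ℂ L2 := Submodule.span ℂ (Set.range fun i : ℕ => lp.single 2 i (1 : ℂ))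

end

/-! Square-summability of the columns puts the conjugated columns `cₖ = conj (ω · k)` in `ℓ²`,
and then `(Ω y)ₖ = ⟪cₖ, y⟫`, while `Γ δᵢ = cᵢ`. For any densely defined `T` with `T δᵢ = cᵢ` the
adjoint is therefore computed coordinatewise, `(T* y)ᵢ = ⟪δᵢ, T* y⟫ = ⟪cᵢ, y⟫ = (Ω y)ᵢ`, so
`T* ≤ Ω`; conversely `Ω` is a formal adjoint of `Γ₀`, as one checks on the basis vectors `δᵢ`
spanning its domain. Hence `Γ₀* = Ω`, which is closed like every adjoint, and `Γ* ≤ Γ₀*` because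
`Γ₀ ≤ Γ`. -/

open scoped ComplexConjugate

namespace LinearPMap

variable {𝕜 E F : Type*} [RCLike 𝕜]
  [NormedAddCommGroup E] [InnerProductSpace 𝕜 E] [NormedAddCommGroup F] [InnerProductSpace 𝕜 F]
  {T : E →ₗ.[𝕜] F} {S : F →ₗ.[𝕜] E}

theorem IsFormalAdjoint.of_span {s : Set E} (hsT : s ⊆ T.domain)
    (hTs : T.domain ≤ Submodule.span 𝕜 s)
    (h : ∀ x (hx : x ∈ s) (y : S.domain), inner 𝕜 (T ⟨x, hsT hx⟩) (y : F) = inner 𝕜 x (S y)) :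
    T.IsFormalAdjoint S := by
  have hspan : Submodule.span 𝕜 s ≤ T.domain := Submodule.span_le.mpr hsT
  rintro ⟨x, hx⟩ y
  suffices key : ∀ x ∈ Submodule.span 𝕜 s, ∀ hx : x ∈ T.domain,
      inner 𝕜 (T ⟨x, hx⟩) (y : F) = inner 𝕜 x (S y) from key x (hTs hx) hx
  intro x hx
  induction hx using Submodule.span_induction with
  | mem x hxs => exact fun _ => h x hxs y
  | zero =>
    intro h0
    rw [show (⟨0, h0⟩ : T.domain) = 0 from rfl, map_zero, inner_zero_left, inner_zero_left]
  | add a b ha hb iha ihb =>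
    intro hab
    rw [show (⟨a + b, hab⟩ : T.domain) = ⟨a, hspan ha⟩ + ⟨b, hspan hb⟩ from rfl, map_add,
      inner_add_left, inner_add_left, iha, ihb]
  | smul c a ha iha =>
    intro hca
    rw [show (⟨c • a, hca⟩ : T.domain) = c • ⟨a, hspan ha⟩ from rfl, map_smul,
      inner_smul_left, inner_smul_left, iha]

theorem adjoint_le_adjoint_of_le [CompleteSpace E] {T' : E →ₗ.[𝕜] F}
    (hT : Dense (T.domain : Set E)) (hle : T ≤ T') : T'.adjoint ≤ T.adjoint := by
  refine IsFormalAdjoint.le_adjoint hT fun x y => ?_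
  have hT' : Dense (T'.domain : Set E) := hT.mono hle.1
  rw [hle.2 (y := ⟨x, hle.1 x.2⟩) rfl]
  exact (adjoint_isFormalAdjoint hT').symm _ y

end LinearPMap

local notation "⟪" x ", " y "⟫" => inner ℂ x y

section WeightedAdjacency

variable (ω : ℕ → ℕ → ℂ)

theorem OmegaOp_apply_coe (x : (OmegaOp ω).domain) :
    ((OmegaOp ω x : L2) : ℕ → ℂ) = OmF ω (x : L2) := rfl

theorem OmF_single (i : ℕ) : OmF ω (lp.single 2 i (1 : ℂ) : L2) = ω i := by
  funext k
  rw [OmF, tsum_eq_single i fun j hj => by simp [lp.single_apply, Pi.single_eq_of_ne hj]]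
  simp [lp.single_apply]

theorem single_mem_OmDom {i : ℕ} (hi : Memℓp (ω i) 2) : lp.single 2 i (1 : ℂ) ∈ OmDom ω := by
  refine ⟨fun k => summable_of_ne_finset_zero (s := {i}) fun j hj => ?_,
    (OmF_single ω i).symm ▸ hi⟩
  simp [lp.single_apply, Pi.single_eq_of_ne (Finset.notMem_singleton.mp hj)]

theorem dense_finSupp : Dense (finSupp : Set L2) := by
  have hb : ⇑(default : HilbertBasis ℕ ℂ L2) = fun i => lp.single 2 i (1 : ℂ) :=
    funext fun i => ((default : HilbertBasis ℕ ℂ L2).repr_symm_single i).symm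
  rw [finSupp, ← hb]
  exact Submodule.dense_iff_topologicalClosure_eq_top.mpr (HilbertBasis.dense_span _)

variable {ω} (h : ∀ k, Summable fun i => ‖ω i k‖ ^ 2)
include h

def conjColumn (k : ℕ) : L2 :=
  ⟨fun i => conj (ω i k), memℓp_gen (by simpa using h k)⟩

theorem conjColumn_apply (k i : ℕ) : (conjColumn h k : ℕ → ℂ) i = conj (ω i k) := rfl

theorem summable_mul_column (y : L2) (k : ℕ) : Summable fun i => (y : ℕ → ℂ) i * ω i k := by
  refine (lp.summable_inner (conjColumn h k) y).congr fun i => ?_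
  rw [RCLike.inner_apply, conjColumn_apply, Complex.conj_conj, mul_comm]

theorem OmF_eq_inner (y : L2) (k : ℕ) : OmF ω (y : ℕ → ℂ) k = ⟪conjColumn h k, y⟫ := by
  rw [OmF, lp.inner_eq_tsum]
  refine tsum_congr fun i => ?_
  rw [RCLike.inner_apply, conjColumn_apply, Complex.conj_conj, mul_comm]

theorem mem_OmDom_iff (y : L2) : y ∈ OmDom ω ↔ Memℓp (OmF ω (y : ℕ → ℂ)) 2 :=
  mem_OmDom.trans (and_iff_right (summable_mul_column h y))

theorem adjoint_le_OmegaOp (T : L2 →ₗ.[ℂ] L2) (hT : Dense (T.domain : Set L2))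
    (hTs : ∀ i, ∃ hi : lp.single 2 i (1 : ℂ) ∈ T.domain, T ⟨_, hi⟩ = conjColumn h i) :
    T.adjoint ≤ OmegaOp ω := by
  have hcoord : ∀ y : T.adjoint.domain, ((T.adjoint y : L2) : ℕ → ℂ) = OmF ω (y : L2) := by
    intro y
    funext i
    obtain ⟨hi, hTi⟩ := hTs i
    have hy := (LinearPMap.adjoint_isFormalAdjoint hT).symm ⟨_, hi⟩ y
    rw [hTi, ← OmF_eq_inner h, lp.inner_single_left] at hy
    simpa using hy.symm
  have hdom : T.adjoint.domain ≤ OmDom ω := fun y hy =>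
    (mem_OmDom_iff h y).mpr (hcoord ⟨y, hy⟩ ▸ lp.memℓp _)
  refine ⟨hdom, fun x y hxy => Subtype.ext ?_⟩
  rw [hcoord, OmegaOp_apply_coe, hxy]

theorem exists_domRestrict_conjTranspose_single_eq (i : ℕ) :
    ∃ hi : lp.single 2 i (1 : ℂ) ∈
      ((OmegaOp (fun i k => conj (ω k i))).domRestrict finSupp).domain,
      (OmegaOp (fun i k => conj (ω k i))).domRestrict finSupp ⟨_, hi⟩ = conjColumn h i := by
  have hΓ : lp.single 2 i (1 : ℂ) ∈ OmDom (fun i k => conj (ω k i)) :=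
    single_mem_OmDom _ (conjColumn h i).2
  refine ⟨Submodule.mem_inf.mpr ⟨Submodule.subset_span ⟨i, rfl⟩, hΓ⟩, ?_⟩
  exact (LinearPMap.domRestrict_apply (y := ⟨_, hΓ⟩) rfl).trans
    (Subtype.ext (OmF_single _ i))

theorem finSupp_le_OmDom_conjTranspose : finSupp ≤ OmDom (fun i k => conj (ω k i)) :=
  Submodule.span_le.mpr <| Set.range_subset_iff.mpr fun i => single_mem_OmDom _ (conjColumn h i).2

theorem dense_domRestrict_conjTranspose :
    Dense (((OmegaOp (fun i k => conj (ω k i))).domRestrict finSupp).domain : Set L2) :=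
  dense_finSupp.mono <| le_inf le_rfl (finSupp_le_OmDom_conjTranspose h)

theorem OmegaOp_le_adjoint_domRestrict :
    OmegaOp ω ≤ ((OmegaOp (fun i k => conj (ω k i))).domRestrict finSupp).adjoint := by
  refine LinearPMap.IsFormalAdjoint.le_adjoint (dense_domRestrict_conjTranspose h) ?_
  refine .of_span (s := Set.range fun i => lp.single 2 i (1 : ℂ))
    (Set.range_subset_iff.mpr fun i => (exists_domRestrict_conjTranspose_single_eq h i).1)
    inf_le_left ?_
  rintro _ ⟨i, rfl⟩ y
  obtain ⟨_, hval⟩ := exists_domRestrict_conjTranspose_single_eq h i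
  rw [hval, ← OmF_eq_inner h, lp.inner_single_left, OmegaOp_apply_coe]
  simp

end WeightedAdjacency

/-- If every column of the weighted adjacency matrix `ω` is square-summable
(`∑_i |ω i k|² < ∞` for every `k`), then the operator `Γ` (given by
`(Γ v) k = ∑' i, v i * conj (ω k i)`, i.e. `Γ = OmegaOp (fun i k => conj (ω k i))`) is
densely defined, the adjoint of its restriction `Γ₀` to the finitely supported sequences
equals `Ω` (so in particular `Γ* ⊆ Γ₀* = Ω`), and `Ω` is a closed operator. -/
theorem stmt_1 (ω : ℕ → ℕ → ℂ)
    (h : ∀ k : ℕ, Summable fun i => ‖ω i k‖ ^ 2) :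
    Dense ((OmegaOp (fun i k => (starRingEnd ℂ) (ω k i))).domain : Set L2) ∧
    ((OmegaOp (fun i k => (starRingEnd ℂ) (ω k i))).domRestrict finSupp).adjoint = OmegaOp ω ∧
    (OmegaOp (fun i k => (starRingEnd ℂ) (ω k i))).adjoint ≤
      ((OmegaOp (fun i k => (starRingEnd ℂ) (ω k i))).domRestrict finSupp).adjoint ∧
    (OmegaOp ω).IsClosed := by
  have hΓ₀ := dense_domRestrict_conjTranspose h
  have hadj : ((OmegaOp (fun i k => conj (ω k i))).domRestrict finSupp).adjoint = OmegaOp ω :=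
    le_antisymm (adjoint_le_OmegaOp h _ hΓ₀ (exists_domRestrict_conjTranspose_single_eq h))
      (OmegaOp_le_adjoint_domRestrict h)
  exact ⟨dense_finSupp.mono (finSupp_le_OmDom_conjTranspose h), hadj,
    LinearPMap.adjoint_le_adjoint_of_le hΓ₀ LinearPMap.domRestrict_le,
    hadj ▸ LinearPMap.adjoint_isClosed hΓ₀⟩
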